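/- Let e and x be elements of a (possibly non-unital) ring R with e² = e. Then for every natural number n there exist elements r₀, r₁, …, r_n ∈ R such that [e,x]_n = Σ_{i=0}^{n} r_i · e · [e,x]_i. -/

import Mathlib

/-- The iterated commutator `[e,x]_n`: `[e,x]_0 = e`, `[e,x]_{n+1} = [e,x]_n * x - x * [e,x]_n`. -/
def iterComm {R : Type*} [NonUnitalRing R] (e x : R) : ℕ → R
  | 0 => e
  | n + 1 => iterComm e x n * x - x * iterComm e x n

/-!
Let `Sₙ` be the additive group of sums `∑_{i ≤ n} rᵢ * (e * [e,x]ᵢ)`; it is stable under left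
multiplication. Since `[e,x]_{i+1} = [e,x]ᵢ * x - x * [e,x]ᵢ`, we get `Sₙ * x ⊆ S_{n+1}` as soon as
`e * x * [e,x]ᵢ ∈ Sᵢ` for all `i ≤ n`. By strong induction `e * y * [e,x]ₙ ∈ Sₙ` for every `y`:
the base case is `e * y * e = (e * y) * (e * e)`, and the step is
`e * y * [e,x]_{n+1} = (e * y * [e,x]ₙ) * x - e * (y * x) * [e,x]ₙ`.
Then `[e,x]_{n+1} = [e,x]ₙ * x - x * [e,x]ₙ ∈ S_{n+1}` by induction on `n`.
-/

section LeftSpan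

variable {R : Type*} [NonUnitalRing R]

def leftSpan (a : ℕ → R) (n : ℕ) : AddSubgroup R where
  carrier := {y | ∃ r : ℕ → R, y = ∑ i ∈ Finset.range (n + 1), r i * a i}
  add_mem' := by
    rintro _ _ ⟨r, rfl⟩ ⟨s, rfl⟩
    exact ⟨r + s, by simp only [Pi.add_apply, add_mul, Finset.sum_add_distrib]⟩
  zero_mem' := ⟨0, by simp⟩
  neg_mem' := by
    rintro _ ⟨r, rfl⟩
    exact ⟨-r, by simp only [Pi.neg_apply, neg_mul, Finset.sum_neg_distrib]⟩

variable {a : ℕ → R} {n m : ℕ}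

theorem mul_mem_leftSpan (r : R) {i : ℕ} (hi : i ≤ n) : r * a i ∈ leftSpan a n :=
  ⟨fun j => if j = i then r else 0, by
    simp [ite_mul, Finset.sum_ite_eq', Nat.lt_succ_iff.mpr hi]⟩

theorem leftSpan_le_iff {H : AddSubgroup R} :
    leftSpan a n ≤ H ↔ ∀ r : R, ∀ i ≤ n, r * a i ∈ H := by
  refine ⟨fun h r i hi => h (mul_mem_leftSpan r hi), ?_⟩
  rintro h _ ⟨r, rfl⟩
  exact sum_mem fun i hi => h (r i) i (Nat.lt_succ_iff.mp (Finset.mem_range.mp hi))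

theorem leftSpan_mono (hnm : n ≤ m) : leftSpan a n ≤ leftSpan a m :=
  leftSpan_le_iff.mpr fun r _ hi => mul_mem_leftSpan r (hi.trans hnm)

theorem mul_mem_leftSpan_of_mem (z : R) {y : R} (hy : y ∈ leftSpan a n) :
    z * y ∈ leftSpan a n := by
  refine (leftSpan_le_iff (H := (leftSpan a n).comap (AddMonoidHom.mulLeft z))).mpr ?_ hy
  intro r i hi
  simpa [mul_assoc] using mul_mem_leftSpan (z * r) hi

end LeftSpan

section IterComm

variable {R : Type*} [NonUnitalRing R] {e x : R}

theorem iterComm_zero (e x : R) : iterComm e x 0 = e := rfl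

theorem iterComm_succ (e x : R) (n : ℕ) :
    iterComm e x (n + 1) = iterComm e x n * x - x * iterComm e x n := rfl

theorem mul_right_mem_leftSpan_succ {n : ℕ}
    (hx : ∀ i ≤ n, e * x * iterComm e x i ∈ leftSpan (e * iterComm e x ·) i) {y : R}
    (hy : y ∈ leftSpan (e * iterComm e x ·) n) :
    y * x ∈ leftSpan (e * iterComm e x ·) (n + 1) := by
  refine (leftSpan_le_iff (H := (leftSpan _ (n + 1)).comap (AddMonoidHom.mulRight x))).mpr ?_ hy
  intro r i hi
  have hsplit : r * (e * iterComm e x i) * x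
      = r * (e * iterComm e x (i + 1)) + r * (e * x * iterComm e x i) := by
    rw [iterComm_succ]
    noncomm_ring
  rw [AddSubgroup.mem_comap, AddMonoidHom.mulRight_apply, hsplit]
  exact add_mem (mul_mem_leftSpan r (by omega))
    (leftSpan_mono (by omega) (mul_mem_leftSpan_of_mem r (hx i hi)))

theorem idem_mul_mul_iterComm_mem_leftSpan (he : e * e = e) (y : R) (n : ℕ) :
    e * y * iterComm e x n ∈ leftSpan (e * iterComm e x ·) n := by
  induction n using Nat.strong_induction_on generalizing y with
  | _ n ih =>
    cases n with
    | zero =>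
      have hbase : e * y * iterComm e x 0 = e * y * (e * iterComm e x 0) := by
        rw [iterComm_zero, he]
      rw [hbase]
      exact mul_mem_leftSpan (e * y) le_rfl
    | succ n =>
      have hstep : e * y * iterComm e x (n + 1)
          = e * y * iterComm e x n * x - e * (y * x) * iterComm e x n := by
        rw [iterComm_succ]
        noncomm_ring
      rw [hstep]
      exact sub_mem
        (mul_right_mem_leftSpan_succ (fun i hi => ih i (by omega) x) (ih n n.lt_succ_self y))
        (leftSpan_mono n.le_succ (ih n n.lt_succ_self (y * x)))

theorem iterComm_mem_leftSpan (he : e * e = e) (n : ℕ) :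
    iterComm e x n ∈ leftSpan (e * iterComm e x ·) n := by
  induction n with
  | zero =>
    have hbase : iterComm e x 0 = e * (e * iterComm e x 0) := by
      rw [iterComm_zero, he, he]
    rw [hbase]
    exact mul_mem_leftSpan e le_rfl
  | succ n ih =>
    rw [iterComm_succ]
    exact sub_mem
      (mul_right_mem_leftSpan_succ (fun i _ => idem_mul_mul_iterComm_mem_leftSpan he x i) ih)
      (leftSpan_mono n.le_succ (mul_mem_leftSpan_of_mem x ih))

end IterComm

/-- Let `e` and `x` be elements of a (possibly non-unital) ring with `e * e = e`.
Then for every `n` there are `r₀, …, rₙ ∈ R` with `[e,x]_n = Σ_{i=0}^n rᵢ * e * [e,x]_i`. -/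
theorem iterComm_eq_sum_mul_idem_mul_iterComm
    {R : Type*} [NonUnitalRing R] (e x : R) (he : e * e = e) (n : ℕ) :
    ∃ r : ℕ → R,
      iterComm e x n = ∑ i ∈ Finset.range (n + 1), r i * e * iterComm e x i := by
  obtain ⟨r, hr⟩ := iterComm_mem_leftSpan (x := x) he n
  exact ⟨r, by simpa only [mul_assoc] using hr⟩
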